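/- Let G be a graph and e = uv an edge of G. Then e is γ-S⁺-critical (i.e., γ(G_e) > γ(G), where G_e is G with e subdivided once) if and only if for every minimum dominating set M of G one of the following holds: (i) u, v ∉ M; (ii) u ∈ M, v ∈ pn_G[u,M], and pn_G[u,M] is not a subset of {u,v}; (iii) v ∈ M, u ∈ pn_G[v,M], and pn_G[v,M] is not a subset of {u,v}. -/

import Mathlib

/-!
Let `x` be the vertex subdividing `uv`. The edge is critical iff `G_e` has no dominating set of
size `γ(G)`. A minimum dominating set `M` of `G` violating (i)–(iii) yields one: `M` itself when
it meets `{u, v}` and neither of `u, v` is a private neighbour of the other (then the edge `uv`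
is never needed), and `M - u + x` when `v ∈ pn[u, M] ⊆ {u, v}`. Conversely, from a dominating set
`D` of `G_e` of size at most `γ(G)` one recovers a minimum dominating set of `G` violating
(i)–(iii): `D ∩ V` when `x ∉ D`, and `(D ∩ V) + u` when `x ∈ D`; in the latter case `u, v ∉ D`,
as otherwise `D ∩ V` alone would dominate `G` with fewer than `γ(G)` vertices.
-/

open SimpleGraph

/-- A graph property: a class of finite simple graphs on arbitrary vertex types. -/
abbrev GraphProp := ∀ (V : Type), SimpleGraph V → Prop

/-- Closure under graph isomorphism. -/
def IsoClosed (P : GraphProp) : Prop :=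
  ∀ (V W : Type) (G : SimpleGraph V) (H : SimpleGraph W), Nonempty (G ≃g H) → P V G → P W H

/-- A property is nondegenerate if it contains all edgeless graphs. -/
def Nondegenerate (P : GraphProp) : Prop :=
  IsoClosed P ∧ ∀ (V : Type), P V ⊥

/-- Closed under induced subgraphs. -/
def InducedHereditary (P : GraphProp) : Prop :=
  IsoClosed P ∧ ∀ (V : Type) (G : SimpleGraph V) (s : Set V), P V G → P s (G.induce s)

/-- Closed under all subgraphs. -/
def Hereditary (P : GraphProp) : Prop :=
  InducedHereditary P ∧ ∀ (V : Type) (G G' : SimpleGraph V), G' ≤ G → P V G → P V G'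

/-- The graph `G` together with one new isolated vertex. -/
def addK1 {V : Type} (G : SimpleGraph V) : SimpleGraph (V ⊕ Unit) where
  Adj a b := ∃ x y, a = Sum.inl x ∧ b = Sum.inl y ∧ G.Adj x y
  symm := ⟨by rintro a b ⟨x, y, rfl, rfl, h⟩; exact ⟨y, x, rfl, rfl, h.symm⟩⟩
  loopless := ⟨by rintro a ⟨x, y, rfl, hy, h⟩; simp only [Sum.inl.injEq] at hy; subst hy; exact G.loopless.irrefl _ h⟩

/-- Closure under disjoint union with `K₁`. -/
def ClosedUnderK1 (P : GraphProp) : Prop :=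
  ∀ (V : Type) (G : SimpleGraph V), P V G → P (V ⊕ Unit) (addK1 G)

/-- `S` is a dominating set of `G`. -/
def IsDominating {V : Type} (G : SimpleGraph V) (S : Set V) : Prop :=
  ∀ v ∉ S, ∃ u ∈ S, G.Adj u v

/-- `S` is a dominating set inducing a subgraph with property `P`. -/
def IsDomPSet (P : GraphProp) {V : Type} (G : SimpleGraph V) (S : Set V) : Prop :=
  IsDominating G S ∧ P S (G.induce S)

/-- The domination number with respect to the property `P`. -/
noncomputable def gammaP (P : GraphProp) {V : Type} [Fintype V] (G : SimpleGraph V) : ℕ :=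
  sInf (Set.ncard '' {S : Set V | IsDomPSet P G S})

/-- A minimum dominating `P`-set. -/
def IsGammaSet (P : GraphProp) {V : Type} [Fintype V] (G : SimpleGraph V) (S : Set V) : Prop :=
  IsDomPSet P G S ∧ S.ncard = gammaP P G

/-- The ordinary domination number. -/
noncomputable def gamma {V : Type} [Fintype V] (G : SimpleGraph V) : ℕ :=
  sInf (Set.ncard '' {S : Set V | IsDominating G S})

/-- The graph obtained from `G` by deleting the edge `uv` and replacing it by the
path `u - x₀ - x₁ - ⋯ - x_{t-1} - v` through `t` new vertices. -/
def subdiv {V : Type} (G : SimpleGraph V) (u v : V) (t : ℕ) : SimpleGraph (V ⊕ Fin t) where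
  Adj a b := match a, b with
    | Sum.inl a, Sum.inl b => G.Adj a b ∧ ¬((a = u ∧ b = v) ∨ (a = v ∧ b = u))
    | Sum.inl a, Sum.inr i => (a = u ∧ (i : ℕ) = 0) ∨ (a = v ∧ (i : ℕ) + 1 = t)
    | Sum.inr i, Sum.inl a => (a = u ∧ (i : ℕ) = 0) ∨ (a = v ∧ (i : ℕ) + 1 = t)
    | Sum.inr i, Sum.inr j => (i : ℕ) + 1 = (j : ℕ) ∨ (j : ℕ) + 1 = (i : ℕ)
  symm := ⟨by
    rintro (a | i) (b | j) h
    · exact ⟨h.1.symm, fun hc => h.2 (by tauto)⟩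
    · exact h
    · exact h
    · tauto⟩
  loopless := ⟨by
    rintro (a | i) h
    · exact G.loopless.irrefl a h.1
    · omega⟩

/-- The private neighbour set `pn_G[x, X] = {y : N[y,G] ∩ X = {x}}`. -/
def pn {V : Type} (G : SimpleGraph V) (X : Set V) (x : V) : Set V :=
  {y | insert y (G.neighborSet y) ∩ X = {x}}

/-- The graph `G` with the vertex `v` deleted. -/
abbrev delVert {V : Type} (G : SimpleGraph V) (v : V) : SimpleGraph {w : V // w ≠ v} :=
  G.induce {w : V | w ≠ v}

/-- An independent set. -/
def IsIndep {V : Type} (G : SimpleGraph V) (S : Set V) : Prop :=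
  S.Pairwise fun a b => ¬ G.Adj a b

section

variable {V : Type}

lemma gamma_le_ncard [Fintype V] {G : SimpleGraph V} {S : Set V} (hS : IsDominating G S) :
    gamma G ≤ S.ncard :=
  Nat.sInf_le ⟨S, hS, rfl⟩

lemma exists_isDominating_ncard_eq_gamma [Fintype V] (G : SimpleGraph V) :
    ∃ S : Set V, IsDominating G S ∧ S.ncard = gamma G :=
  Nat.sInf_mem (s := Set.ncard '' {S : Set V | IsDominating G S})
    ⟨_, Set.univ, fun _ hw => absurd (Set.mem_univ _) hw, rfl⟩

lemma mem_pn_iff {G : SimpleGraph V} {X : Set V} {x y : V} :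
    y ∈ pn G X x ↔ x ∈ X ∧ (x = y ∨ G.Adj y x) ∧ ∀ z ∈ X, (z = y ∨ G.Adj y z) → z = x := by
  simp only [pn, Set.mem_ofPred_eq, Set.eq_singleton_iff_unique_mem, Set.mem_inter_iff,
    Set.mem_insert_iff, mem_neighborSet]
  exact ⟨fun ⟨⟨hx, hxX⟩, h⟩ => ⟨hxX, hx, fun z hz hzy => h z ⟨hzy, hz⟩⟩,
    fun ⟨hxX, hx, h⟩ => ⟨⟨hx, hxX⟩, fun z hz => h z hz.2 hz.1⟩⟩

lemma mem_of_mem_pn {G : SimpleGraph V} {X : Set V} {x y : V} (h : y ∈ pn G X x) : x ∈ X :=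
  (mem_pn_iff.1 h).1

lemma IsDominating.exists_adj_ne_of_notMem_pn {G : SimpleGraph V} {X : Set V} {x y : V}
    (hX : IsDominating G X) (hy : y ∉ X) (hpn : y ∉ pn G X x) :
    ∃ z ∈ X, z ≠ x ∧ G.Adj z y := by
  by_contra! h
  obtain ⟨z, hz, hzy⟩ := hX y hy
  obtain rfl : z = x := by_contra fun hzx => h z hz hzx hzy
  refine hpn (mem_pn_iff.2 ⟨hz, Or.inr hzy.symm, fun w hw hwy => ?_⟩)
  rcases hwy with rfl | hwy
  · exact absurd hw hy
  · exact by_contra fun hwz => h w hw hwz hwy.symm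

@[simp]
lemma subdiv_adj_inl_inl {G : SimpleGraph V} {u v a b : V} {t : ℕ} :
    (subdiv G u v t).Adj (Sum.inl a) (Sum.inl b) ↔
      G.Adj a b ∧ ¬((a = u ∧ b = v) ∨ (a = v ∧ b = u)) :=
  Iff.rfl

@[simp]
lemma subdiv_one_adj_inl_inr {G : SimpleGraph V} {u v a : V} {i : Fin 1} :
    (subdiv G u v 1).Adj (Sum.inl a) (Sum.inr i) ↔ a = u ∨ a = v := by
  simp [subdiv, Fin.fin_one_eq_zero i]

@[simp]
lemma subdiv_one_adj_inr_inl {G : SimpleGraph V} {u v a : V} {i : Fin 1} :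
    (subdiv G u v 1).Adj (Sum.inr i) (Sum.inl a) ↔ a = u ∨ a = v :=
  (subdiv G u v 1).adj_comm _ _ |>.trans subdiv_one_adj_inl_inr

@[simp]
lemma subdiv_one_not_adj_inr_inr {G : SimpleGraph V} {u v : V} {i j : Fin 1} :
    ¬ (subdiv G u v 1).Adj (Sum.inr i) (Sum.inr j) := by
  rw [Subsingleton.elim i j]
  exact (subdiv G u v 1).irrefl

lemma subdiv_one_comm (G : SimpleGraph V) (u v : V) : subdiv G u v 1 = subdiv G v u 1 := by
  ext (a | i) (b | j) <;> simp <;> tauto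

lemma subdiv_adj_inl_inl_of_adj {G : SimpleGraph V} {u v z a : V} {t : ℕ} (h : G.Adj z a)
    (hu : a = v → z ≠ u) (hv : a = u → z ≠ v) : (subdiv G u v t).Adj (Sum.inl z) (Sum.inl a) :=
  ⟨h, by rintro (⟨rfl, rfl⟩ | ⟨rfl, rfl⟩) <;> simp_all⟩

def SubdivObstructs (G : SimpleGraph V) (M : Set V) (u v : V) : Prop :=
  (u ∉ M ∧ v ∉ M) ∨
    (u ∈ M ∧ v ∈ pn G M u ∧ ¬ pn G M u ⊆ {u, v}) ∨
    (v ∈ M ∧ u ∈ pn G M v ∧ ¬ pn G M v ⊆ {u, v})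

lemma IsDominating.subdiv_image_inl {G : SimpleGraph V} {M : Set V} {u v : V}
    (hM : IsDominating G M) (huv : u ∈ M ∨ v ∈ M) (hv : v ∉ pn G M u) (hu : u ∉ pn G M v) :
    IsDominating (subdiv G u v 1) (Sum.inl '' M) := by
  rintro (a | i) ha
  · have haM : a ∉ M := fun h => ha ⟨a, h, rfl⟩
    obtain ⟨z, hz, hza, hzu, hzv⟩ :
        ∃ z ∈ M, G.Adj z a ∧ (a = v → z ≠ u) ∧ (a = u → z ≠ v) := by
      by_cases hav : a = v
      · subst hav
        obtain ⟨z, hz, hzu, hza⟩ := hM.exists_adj_ne_of_notMem_pn haM hv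
        exact ⟨z, hz, hza, fun _ => hzu, fun _ => hza.ne⟩
      by_cases hau : a = u
      · subst hau
        obtain ⟨z, hz, hzv, hza⟩ := hM.exists_adj_ne_of_notMem_pn haM hu
        exact ⟨z, hz, hza, fun _ => hza.ne, fun _ => hzv⟩
      obtain ⟨z, hz, hza⟩ := hM a haM
      exact ⟨z, hz, hza, (absurd · hav), (absurd · hau)⟩
    exact ⟨_, ⟨z, hz, rfl⟩, subdiv_adj_inl_inl_of_adj hza hzu hzv⟩
  · rcases huv with hu | hv
    · exact ⟨_, ⟨u, hu, rfl⟩, by simp⟩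
    · exact ⟨_, ⟨v, hv, rfl⟩, by simp⟩

lemma IsDominating.subdiv_insert_inr_image_inl_diff {G : SimpleGraph V} {M : Set V} {u v : V}
    (hM : IsDominating G M) (hpn : pn G M u ⊆ {u, v}) :
    IsDominating (subdiv G u v 1) (insert (Sum.inr 0) (Sum.inl '' (M \ {u}))) := by
  rintro (a | i) ha
  · by_cases hauv : a = u ∨ a = v
    · exact ⟨Sum.inr 0, Set.mem_insert _ _, by simpa using hauv⟩
    rw [not_or] at hauv
    have haM : a ∉ M := fun h => ha (Set.mem_insert_of_mem _ ⟨a, ⟨h, hauv.1⟩, rfl⟩)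
    have hapn : a ∉ pn G M u := fun h => by simpa [hauv.1, hauv.2] using hpn h
    obtain ⟨z, hz, hzu, hza⟩ := hM.exists_adj_ne_of_notMem_pn haM hapn
    exact ⟨Sum.inl z, Set.mem_insert_of_mem _ ⟨z, ⟨hz, hzu⟩, rfl⟩,
      subdiv_adj_inl_inl_of_adj hza (absurd · hauv.2) (absurd · hauv.1)⟩
  · exact absurd (Subsingleton.elim i 0 ▸ Set.mem_insert _ _) ha

lemma exists_isDominating_subdiv_of_pn_subset [Finite V] {G : SimpleGraph V} {M : Set V}
    {u v : V} (hM : IsDominating G M) (hu : u ∈ M) (hpn : pn G M u ⊆ {u, v}) :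
    ∃ D, IsDominating (subdiv G u v 1) D ∧ D.ncard ≤ M.ncard := by
  refine ⟨_, hM.subdiv_insert_inr_image_inl_diff hpn, ?_⟩
  calc _ ≤ (Sum.inl '' (M \ {u}) : Set (V ⊕ Fin 1)).ncard + 1 := Set.ncard_insert_le _ _
    _ = (M \ {u}).ncard + 1 := by rw [Set.ncard_image_of_injective _ Sum.inl_injective]
    _ = M.ncard := Set.ncard_sdiff_singleton_add_one hu

lemma exists_isDominating_subdiv_of_not_subdivObstructs [Finite V] {G : SimpleGraph V}
    {M : Set V} {u v : V} (hM : IsDominating G M) (hobs : ¬ SubdivObstructs G M u v) :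
    ∃ D, IsDominating (subdiv G u v 1) D ∧ D.ncard ≤ M.ncard := by
  simp only [SubdivObstructs, not_or, not_and, not_not] at hobs
  obtain ⟨huv, hu, hv⟩ := hobs
  by_cases hvu : v ∈ pn G M u
  · exact exists_isDominating_subdiv_of_pn_subset hM (mem_of_mem_pn hvu)
      (hu (mem_of_mem_pn hvu) hvu)
  by_cases huv' : u ∈ pn G M v
  · rw [subdiv_one_comm]
    exact exists_isDominating_subdiv_of_pn_subset hM (mem_of_mem_pn huv')
      (Set.pair_comm u v ▸ hv (mem_of_mem_pn huv') huv')
  exact ⟨_, hM.subdiv_image_inl (or_iff_not_imp_left.2 huv) hvu huv',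
    (Set.ncard_image_of_injective _ Sum.inl_injective).le⟩

lemma ncard_preimage_inl_le {α β : Type} [Finite (α ⊕ β)] (D : Set (α ⊕ β)) :
    (Sum.inl ⁻¹' D).ncard ≤ D.ncard := by
  rw [← Set.ncard_image_of_injective _ Sum.inl_injective]
  exact Set.ncard_le_ncard (Set.image_preimage_subset _ _)

lemma ncard_preimage_inl_lt {α β : Type} [Finite (α ⊕ β)] {D : Set (α ⊕ β)} {b : β}
    (hb : Sum.inr b ∈ D) : (Sum.inl ⁻¹' D).ncard < D.ncard := by
  rw [← Set.ncard_image_of_injective _ Sum.inl_injective]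
  exact Set.ncard_lt_ncard ((Set.image_preimage_subset _ _).ssubset_of_mem_notMem hb (by simp))

lemma IsDominating.preimage_inl {G : SimpleGraph V} {u v : V} (he : G.Adj u v)
    {D : Set (V ⊕ Fin 1)} (hD : IsDominating (subdiv G u v 1) D)
    (huv : u ∈ Sum.inl ⁻¹' D ∨ v ∈ Sum.inl ⁻¹' D) : IsDominating G (Sum.inl ⁻¹' D) := by
  intro w hw
  obtain ⟨a | i, hd, hadj⟩ := hD _ hw
  · exact ⟨a, hd, hadj.1⟩
  · rcases subdiv_one_adj_inr_inl.1 hadj with rfl | rfl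
    · exact ⟨v, huv.resolve_left hw, he.symm⟩
    · exact ⟨u, huv.resolve_right hw, he⟩

lemma IsDominating.insert_preimage_inl {G : SimpleGraph V} {u v : V} (he : G.Adj u v)
    {D : Set (V ⊕ Fin 1)} (hD : IsDominating (subdiv G u v 1) D) :
    IsDominating G (insert u (Sum.inl ⁻¹' D)) := by
  intro w hw
  rw [Set.mem_insert_iff, not_or] at hw
  obtain ⟨a | i, hd, hadj⟩ := hD _ hw.2
  · exact ⟨a, Set.mem_insert_of_mem _ hd, hadj.1⟩
  · obtain rfl := (subdiv_one_adj_inr_inl.1 hadj).resolve_left hw.1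
    exact ⟨u, Set.mem_insert _ _, he⟩

lemma IsDominating.mem_preimage_inl_of_inr_notMem {G : SimpleGraph V} {u v : V}
    {D : Set (V ⊕ Fin 1)} (hD : IsDominating (subdiv G u v 1) D) (hx : Sum.inr 0 ∉ D) :
    u ∈ Sum.inl ⁻¹' D ∨ v ∈ Sum.inl ⁻¹' D := by
  obtain ⟨a | i, hd, hadj⟩ := hD _ hx
  · rcases subdiv_one_adj_inl_inr.1 hadj with rfl | rfl
    exacts [Or.inl hd, Or.inr hd]
  · exact absurd hadj subdiv_one_not_adj_inr_inr

lemma IsDominating.notMem_pn_preimage_inl {G : SimpleGraph V} {u v : V} (huv : u ≠ v)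
    {D : Set (V ⊕ Fin 1)} (hD : IsDominating (subdiv G u v 1) D) (hx : Sum.inr 0 ∉ D) :
    v ∉ pn G (Sum.inl ⁻¹' D) u := by
  intro hv
  obtain ⟨-, -, hpn⟩ := mem_pn_iff.1 hv
  have hvD : v ∉ Sum.inl ⁻¹' D := fun h => huv (hpn v h (Or.inl rfl)).symm
  obtain ⟨a | i, hd, hadj⟩ := hD _ hvD
  · exact hadj.2 (Or.inl ⟨hpn a hd (Or.inr hadj.1.symm), rfl⟩)
  · exact hx (Subsingleton.elim i 0 ▸ hd)

lemma IsDominating.pn_insert_preimage_inl_subset {G : SimpleGraph V} {u v : V}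
    {D : Set (V ⊕ Fin 1)} (hD : IsDominating (subdiv G u v 1) D) (hu : u ∉ Sum.inl ⁻¹' D) :
    pn G (insert u (Sum.inl ⁻¹' D)) u ⊆ {u, v} := by
  intro y hy
  obtain ⟨-, -, hpn⟩ := mem_pn_iff.1 hy
  by_contra hyuv
  rw [Set.mem_insert_iff, Set.mem_singleton_iff, not_or] at hyuv
  have hyD : y ∉ Sum.inl ⁻¹' D := fun h => hyuv.1 (hpn y (Set.mem_insert_of_mem _ h) (Or.inl rfl))
  obtain ⟨a | i, hd, hadj⟩ := hD _ hyD
  · exact hu (hpn a (Set.mem_insert_of_mem _ hd) (Or.inr hadj.1.symm) ▸ hd)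
  · exact (subdiv_one_adj_inr_inl.1 hadj).elim hyuv.1 hyuv.2

lemma exists_not_subdivObstructs_of_isDominating_subdiv [Fintype V] {G : SimpleGraph V}
    {u v : V} (he : G.Adj u v) {D : Set (V ⊕ Fin 1)} (hD : IsDominating (subdiv G u v 1) D)
    (hcard : D.ncard ≤ gamma G) :
    ∃ M, IsDominating G M ∧ M.ncard = gamma G ∧ ¬ SubdivObstructs G M u v := by
  by_cases hx : Sum.inr 0 ∈ D
  · have hlt := ncard_preimage_inl_lt hx
    have hu : u ∉ Sum.inl ⁻¹' D := fun h =>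
      (gamma_le_ncard (hD.preimage_inl he (Or.inl h))).not_gt (hlt.trans_le hcard)
    have hv : v ∉ Sum.inl ⁻¹' D := fun h =>
      (gamma_le_ncard (hD.preimage_inl he (Or.inr h))).not_gt (hlt.trans_le hcard)
    have hM := hD.insert_preimage_inl he
    refine ⟨_, hM, le_antisymm ?_ (gamma_le_ncard hM), ?_⟩
    · exact (Set.ncard_insert_le _ _).trans (Nat.succ_le_of_lt hlt |>.trans hcard)
    rintro (⟨h, -⟩ | ⟨-, -, h⟩ | ⟨h, -⟩)
    · exact h (Set.mem_insert _ _)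
    · exact h (hD.pn_insert_preimage_inl_subset hu)
    · exact (Set.mem_insert_iff.1 h).elim he.ne' hv
  · have hM := hD.preimage_inl he (hD.mem_preimage_inl_of_inr_notMem hx)
    refine ⟨_, hM, le_antisymm ((ncard_preimage_inl_le D).trans hcard) (gamma_le_ncard hM), ?_⟩
    rintro (⟨hu, hv⟩ | ⟨-, h, -⟩ | ⟨-, h, -⟩)
    · exact (hD.mem_preimage_inl_of_inr_notMem hx).elim hu hv
    · exact hD.notMem_pn_preimage_inl he.ne hx h
    · exact (subdiv_one_comm G u v ▸ hD).notMem_pn_preimage_inl he.ne' hx h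

end

/-- an edge `e = uv` is `γ`-S⁺-critical iff every minimum dominating set `M`
of `G` satisfies (i), (ii) or (iii). -/
theorem gamma_splus_critical_iff {V : Type} [Fintype V] (G : SimpleGraph V)
    (u v : V) (he : G.Adj u v) :
    gamma G < gamma (subdiv G u v 1) ↔
    ∀ M : Set V, (IsDominating G M ∧ M.ncard = gamma G) →
      ((u ∉ M ∧ v ∉ M) ∨
       (u ∈ M ∧ v ∈ pn G M u ∧ ¬ pn G M u ⊆ {u, v}) ∨
       (v ∈ M ∧ u ∈ pn G M v ∧ ¬ pn G M v ⊆ {u, v})) := by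
  rw [← not_le]
  constructor
  · rintro hcrit M ⟨hM, hMcard⟩
    by_contra hobs
    obtain ⟨D, hD, hDcard⟩ := exists_isDominating_subdiv_of_not_subdivObstructs hM hobs
    exact hcrit ((gamma_le_ncard hD).trans (hDcard.trans_eq hMcard))
  · intro hobs hle
    obtain ⟨D, hD, hDcard⟩ := exists_isDominating_ncard_eq_gamma (subdiv G u v 1)
    obtain ⟨M, hM, hMcard, hnot⟩ :=
      exists_not_subdivObstructs_of_isDominating_subdiv he hD (hDcard.trans_le hle)
    exact hnot (hobs M ⟨hM, hMcard⟩)
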